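/- Let h₀ : ℝ → ℝ be r-times continuously differentiable and γ₁, …, γ_r > 0. Define h_j(t) = ḣ_{j-1}(t) + γ_j h_{j-1}(t) for j = 1, …, r. If h_j(0) ≥ 0 for all j = 0, …, r-1 and h_r(t) ≥ 0 for all t ≥ 0, then h_j(t) ≥ 0 for all t ≥ 0 and all j = 0, …, r-1; in particular h₀(t) ≥ 0 for all t ≥ 0. -/

import Mathlib

open Set

/-- Comparison lemma: with the integrating factor `exp (c t)`, the function `exp (c t) f t`
is monotone on `[a, ∞)`. -/
theorem nonneg_of_deriv_add_mul_nonneg {f : ℝ → ℝ} {a c : ℝ} (hf : Differentiable ℝ f)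
    (ha : 0 ≤ f a) (h : ∀ t, a ≤ t → 0 ≤ deriv f t + c * f t) :
    ∀ t, a ≤ t → 0 ≤ f t := by
  set g : ℝ → ℝ := fun t => Real.exp (c * t) * f t
  have hg : ∀ t, HasDerivAt g (Real.exp (c * t) * (deriv f t + c * f t)) t := fun t => by
    refine ((((hasDerivAt_id t).const_mul c).exp).mul (hf t).hasDerivAt).congr_deriv ?_
    simp only [id]
    ring
  have hmono : MonotoneOn g (Ici a) := by
    refine monotoneOn_of_deriv_nonneg (convex_Ici a)
      (fun t _ => (hg t).continuousAt.continuousWithinAt)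
      (fun t _ => (hg t).differentiableAt.differentiableWithinAt) fun t ht => ?_
    rw [interior_Ici] at ht
    rw [(hg t).deriv]
    exact mul_nonneg (Real.exp_pos _).le (h t ht.le)
  intro t ht
  have hgt : 0 ≤ g t :=
    (mul_nonneg (Real.exp_pos _).le ha).trans (hmono self_mem_Ici ht ht)
  exact nonneg_of_mul_nonneg_right hgt (Real.exp_pos _)

theorem ContDiff.deriv_add_const_mul {n : ℕ} {f : ℝ → ℝ} (hf : ContDiff ℝ (n + 1) f)
    (c : ℝ) : ContDiff ℝ n fun t => deriv f t + c * f t :=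
  (contDiff_succ_iff_deriv.mp hf).2.2.add (contDiff_const.mul (hf.of_le (by norm_cast; omega)))

section Cascade

variable {r : ℕ} {γ : ℕ → ℝ} {H : ℕ → ℝ → ℝ}

theorem contDiff_cascade (h0 : ContDiff ℝ r (H 0))
    (hsucc : ∀ j, j < r → H (j + 1) = fun t => deriv (H j) t + γ (j + 1) * H j t) :
    ∀ j, j ≤ r → ContDiff ℝ (r - j : ℕ) (H j) := by
  intro j
  induction j with
  | zero => simpa using h0
  | succ j ih =>
    intro hj
    have hH : ContDiff ℝ ((r - (j + 1) : ℕ) + 1 : ℕ) (H j) := by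
      convert ih (by omega) using 2
      omega
    rw [hsucc j hj]
    exact ContDiff.deriv_add_const_mul (by exact_mod_cast hH) _

theorem cascade_nonneg (hdiff : ∀ j, j < r → Differentiable ℝ (H j))
    (hsucc : ∀ j, j < r → H (j + 1) = fun t => deriv (H j) t + γ (j + 1) * H j t)
    (hinit : ∀ j, j < r → 0 ≤ H j 0) (hr : ∀ t, 0 ≤ t → 0 ≤ H r t) :
    ∀ j, j ≤ r → ∀ t, 0 ≤ t → 0 ≤ H j t := by
  intro j hj
  induction hj using Nat.decreasingInduction with
  | self => exact hr
  | of_succ j hj ih =>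
    refine nonneg_of_deriv_add_mul_nonneg (c := γ (j + 1)) (hdiff j hj) (hinit j hj)
      fun t ht => ?_
    simpa only [hsucc j hj] using ih t ht

end Cascade

theorem hocbf_cascade_general (r : ℕ) (h₀ : ℝ → ℝ) (γ : ℕ → ℝ) (H : ℕ → ℝ → ℝ)
    (hsmooth : ContDiff ℝ r h₀)
    (hH0 : H 0 = h₀)
    (hHsucc : ∀ j, j < r → H (j + 1) = fun t => deriv (H j) t + γ (j + 1) * H j t)
    (hinit : ∀ j, j < r → H j 0 ≥ 0)
    (hr : ∀ t, 0 ≤ t → H r t ≥ 0) :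
    ∀ j, j < r → ∀ t, 0 ≤ t → H j t ≥ 0 := by
  have hdiff : ∀ j, j < r → Differentiable ℝ (H j) := fun j hj =>
    (contDiff_cascade (hH0 ▸ hsmooth) hHsucc j hj.le).differentiable (by norm_cast; omega)
  exact fun j hj => cascade_nonneg hdiff hHsucc hinit hr j hj.le

/-- Higher-order CBF cascade: with `h_j = ḣ_{j-1} + γ_j h_{j-1}`, if `h_j(0) ≥ 0` for
`j = 0,…,r-1` and `h_r(t) ≥ 0` for all `t ≥ 0`, then `h_j(t) ≥ 0` for all `t ≥ 0`
and `j = 0,…,r-1`; in particular `h₀(t) ≥ 0`. -/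
theorem hocbf_cascade (r : ℕ) (h₀ : ℝ → ℝ) (γ : ℕ → ℝ) (H : ℕ → ℝ → ℝ)
    (hγ : ∀ j, 1 ≤ j → j ≤ r → 0 < γ j)
    (hsmooth : ContDiff ℝ r h₀)
    (hH0 : H 0 = h₀)
    (hHsucc : ∀ j, j < r → H (j + 1) = fun t => deriv (H j) t + γ (j + 1) * H j t)
    (hinit : ∀ j, j < r → H j 0 ≥ 0)
    (hr : ∀ t, 0 ≤ t → H r t ≥ 0) :
    ∀ j, j < r → ∀ t, 0 ≤ t → H j t ≥ 0 :=
  hocbf_cascade_general r h₀ γ H hsmooth hH0 hHsucc hinit hr
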